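/- There is no finite connected 3-GNDB graph with parameter γ = 2 whose diameter is at least 3. -/

import Mathlib

/-!
Summing `d(x, a) - d(x, b)` over all `x` shows that the transmission `∑ₓ d(x, ·)` changes by
`±2γ` along every edge `ab`, hence by `2γ` modulo `4γ`. So no vertex is equidistant from the ends
of an edge, `W_{ab}` and `W_{ba}` partition the vertices, and there are `4γ = 8` of them.

For `γ = 2`, an edge `ab` with `|W_{ab}| = 2` has `W_{ab} = {a, c}`, where `b` and `c` are the
only neighbours of `a`. On a geodesic `x₀x₁x₂x₃` with `|W_{x₁x₂}| = 2` this makes `x₂` a vertex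
of degree at least three, so that all its neighbours are small ends, and `x₁`, `x₃` have
different partners. Each of them closes up a 4-cycle through `x₂`; the seven vertices
of the two 4-cycles have all their neighbours among themselves except `x₂`, so the eighth
vertex can only be adjacent to `x₂`, which a small end cannot be.
-/

/-- The set of vertices closer to `a` than to `b`. -/
def closerSet {V : Type*} (G : SimpleGraph V) (a b : V) : Set V :=
  {x | G.dist x a < G.dist x b}

namespace SimpleGraph

variable {V : Type*} {G : SimpleGraph V} {a b c u v w : V}

lemma Adj.dist_le_dist_add_one (hvw : G.Adj v w) (u : V) : G.dist u v ≤ G.dist u w + 1 := by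
  have := hvw.symm.diff_dist_adj (u := u)
  omega

lemma Connected.exists_adj_dist_eq (hconn : G.Connected) {n : ℕ} (h : G.dist u v = n + 1) :
    ∃ w, G.Adj u w ∧ G.dist w v = n := by
  obtain ⟨p, hp⟩ := hconn.exists_walk_length_eq_dist u v
  cases p with
  | nil => simp at h
  | cons hadj q =>
    refine ⟨_, hadj, le_antisymm ?_ ?_⟩
    · have := dist_le q
      rw [Walk.length_cons] at hp
      omega
    · have := hadj.dist_le_dist_add_one v
      rw [dist_comm (u := v), dist_comm (u := v)] at this
      omega

lemma Connected.exists_adj_adj_adj_dist_eq_three (hconn : G.Connected) (h : 3 ≤ G.dist u v) :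
    ∃ x₁ x₂ x₃, G.Adj u x₁ ∧ G.Adj x₁ x₂ ∧ G.Adj x₂ x₃ ∧ G.dist u x₃ = 3 := by
  obtain ⟨m, hm⟩ : ∃ m, G.dist u v = m + 3 := ⟨G.dist u v - 3, by omega⟩
  obtain ⟨x₁, h₁, hx₁⟩ := hconn.exists_adj_dist_eq (n := m + 2) hm
  obtain ⟨x₂, h₂, hx₂⟩ := hconn.exists_adj_dist_eq (n := m + 1) hx₁
  obtain ⟨x₃, h₃, hx₃⟩ := hconn.exists_adj_dist_eq (n := m) hx₂
  refine ⟨x₁, x₂, x₃, h₁, h₂, h₃, le_antisymm ?_ ?_⟩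
  · simpa using dist_le (.cons h₁ (.cons h₂ (.cons h₃ .nil)) : G.Walk u x₃)
  · have : G.dist u v ≤ G.dist u x₃ + G.dist x₃ v := hconn.dist_triangle
    omega

lemma Connected.exists_adj_mem_closerSet (hconn : G.Connected) (hu : u ∈ closerSet G a b)
    (hua : u ≠ a) : ∃ w, G.Adj u w ∧ w ∈ closerSet G a b := by
  obtain ⟨n, hn⟩ : ∃ n, G.dist u a = n + 1 :=
    Nat.exists_eq_add_one.mpr (hconn.pos_dist_of_ne hua)
  obtain ⟨w, huw, hw⟩ := hconn.exists_adj_dist_eq hn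
  have := huw.dist_le_dist_add_one b
  rw [dist_comm (u := b), dist_comm (u := b)] at this
  refine ⟨w, huw, ?_⟩
  change G.dist u a < G.dist u b at hu
  show G.dist w a < G.dist w b
  omega

lemma Connected.dist_eq_two_of_dist_eq_three (hconn : G.Connected) {x₀ x₁ x₂ x₃ : V}
    (h₀₁ : G.Adj x₀ x₁) (h₁₂ : G.Adj x₁ x₂) (h₂₃ : G.Adj x₂ x₃) (h₀₃ : G.dist x₀ x₃ = 3) :
    G.dist x₀ x₂ = 2 := by
  have h₀₁₂ : G.dist x₀ x₂ ≤ G.dist x₀ x₁ + G.dist x₁ x₂ := hconn.dist_triangle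
  have h₀₂₃ : G.dist x₀ x₃ ≤ G.dist x₀ x₂ + G.dist x₂ x₃ := hconn.dist_triangle
  rw [dist_eq_one_iff_adj.mpr h₀₁, dist_eq_one_iff_adj.mpr h₁₂] at h₀₁₂
  rw [dist_eq_one_iff_adj.mpr h₂₃] at h₀₂₃
  omega

section transmission

variable [Fintype V]

noncomputable def transmission (G : SimpleGraph V) (v : V) : ℕ := ∑ x, G.dist x v

lemma transmission_sub_transmission (hab : G.Adj a b) :
    (G.transmission a : ℤ) - G.transmission b =
      (closerSet G b a).ncard - (closerSet G a b).ncard := by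
  classical
  have hncard : ∀ a b : V, ((closerSet G a b).ncard : ℤ) =
      ∑ x, if G.dist x a < G.dist x b then 1 else 0 := by
    intro a b
    rw [Finset.sum_boole, ← Set.ncard_coe_finset]
    congr
    ext
    simp [closerSet]
  simp only [transmission, hncard, Nat.cast_sum, ← Finset.sum_sub_distrib]
  refine Finset.sum_congr rfl fun x _ => ?_
  have := hab.dist_le_dist_add_one x
  have := hab.symm.dist_le_dist_add_one x
  split_ifs <;> omega

end transmission

def IsThreeGNDB (G : SimpleGraph V) (γ : ℕ) : Prop :=
  0 < γ ∧ ∀ a b, G.Adj a b →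
    ({(closerSet G a b).ncard, (closerSet G b a).ncard} : Set ℕ) = {γ, 3 * γ}

namespace IsThreeGNDB

variable {γ : ℕ}

lemma ncard_closerSet (hG : G.IsThreeGNDB γ) (hab : G.Adj a b) :
    (closerSet G a b).ncard = γ ∧ (closerSet G b a).ncard = 3 * γ ∨
      (closerSet G a b).ncard = 3 * γ ∧ (closerSet G b a).ncard = γ :=
  Set.pair_eq_pair_iff.mp (hG.2 a b hab)

variable [Fintype V]

lemma transmission_modEq_of_adj (hG : G.IsThreeGNDB γ) (hab : G.Adj a b) :
    (G.transmission a : ℤ) ≡ G.transmission b + 2 * γ [ZMOD 4 * γ] := by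
  have h := transmission_sub_transmission hab
  rw [Int.modEq_iff_dvd]
  rcases hG.ncard_closerSet hab with ⟨h₁, h₃⟩ | ⟨h₃, h₁⟩ <;> rw [h₁, h₃] at h <;> push_cast at h
  · exact ⟨0, by linarith⟩
  · exact ⟨1, by linarith⟩

lemma transmission_modEq_of_walk (hG : G.IsThreeGNDB γ) (p : G.Walk u v) :
    (G.transmission u : ℤ) ≡ G.transmission v + 2 * γ * p.length [ZMOD 4 * γ] := by
  induction p with
  | nil => simp
  | cons hadj q ih =>
    refine (hG.transmission_modEq_of_adj hadj).trans ?_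
    convert ih.add_right (2 * γ) using 1
    push_cast [Walk.length_cons]
    ring

/-- The transmission changes by `2γ` modulo `4γ` along every edge, so modulo `4γ` it records
the parity of distances. -/
lemma dist_ne (hconn : G.Connected) (hG : G.IsThreeGNDB γ) (hab : G.Adj a b) (x : V) :
    G.dist x a ≠ G.dist x b := by
  intro h
  obtain ⟨p, hp⟩ := hconn.exists_walk_length_eq_dist a x
  obtain ⟨q, hq⟩ := hconn.exists_walk_length_eq_dist b x
  have hpq : (G.transmission a : ℤ) ≡ G.transmission b [ZMOD 4 * γ] := by
    have hp' := hG.transmission_modEq_of_walk p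
    have hq' := hG.transmission_modEq_of_walk q
    rw [hp, dist_comm, h, dist_comm, ← hq] at hp'
    exact hp'.trans hq'.symm
  have h2γ : (G.transmission b : ℤ) + 2 * γ ≡ G.transmission b + 0 [ZMOD 4 * γ] := by
    simpa using (hG.transmission_modEq_of_adj hab).symm.trans hpq
  have hdvd : (4 * γ : ℤ) ∣ 2 * γ := by
    simpa using Int.modEq_iff_dvd.mp (Int.ModEq.add_left_cancel' _ h2γ)
  have := Int.le_of_dvd (by simp [hG.1]) hdvd
  have := hG.1
  omega

lemma dist_eq_add_one_or (hconn : G.Connected) (hG : G.IsThreeGNDB γ) (hab : G.Adj a b)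
    (x : V) : G.dist x b = G.dist x a + 1 ∨ G.dist x a = G.dist x b + 1 := by
  have := hab.dist_le_dist_add_one x
  have := hab.symm.dist_le_dist_add_one x
  have := hG.dist_ne hconn hab x
  omega

lemma card_eq (hconn : G.Connected) (hG : G.IsThreeGNDB γ) (hab : G.Adj a b) :
    Nat.card V = 4 * γ := by
  have hcompl : (closerSet G a b)ᶜ = closerSet G b a := by
    ext x
    have := hG.dist_ne hconn hab x
    simp only [closerSet, Set.mem_compl_iff, Set.mem_ofPred_eq]
    omega
  rw [← Set.ncard_add_ncard_compl (closerSet G a b), hcompl]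
  rcases hG.ncard_closerSet hab with ⟨h₁, h₃⟩ | ⟨h₃, h₁⟩ <;> omega

end IsThreeGNDB

/-- `ab` is an edge with `W_{ab} = {a, c}`, recorded through what this forces when no vertex
is equidistant from `a` and `b`. -/
structure IsSmallEnd (G : SimpleGraph V) (a b c : V) : Prop where
  adj : G.Adj a b
  adj_partner : G.Adj a c
  dist_partner : G.dist c b = 2
  eq_or_eq_of_adj : ∀ ⦃y⦄, G.Adj a y → y = b ∨ y = c
  dist_eq : ∀ ⦃x⦄, x ≠ a → x ≠ c → G.dist x a = G.dist x b + 1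

namespace IsSmallEnd

lemma ne (h : G.IsSmallEnd a b c) : c ≠ b := by
  rintro rfl
  simpa using h.dist_partner

lemma eq_of_adj (h : G.IsSmallEnd a b c) (hy : G.Adj a v) (hvb : v ≠ b) : v = c :=
  (h.eq_or_eq_of_adj hy).resolve_left hvb

lemma unique {c' : V} (h : G.IsSmallEnd a b c) (h' : G.IsSmallEnd a b c') : c' = c :=
  h.eq_of_adj h'.adj_partner h'.ne

end IsSmallEnd

namespace IsThreeGNDB

lemma ncard_closerSet_eq_two (hG : G.IsThreeGNDB 2) (hab : G.Adj a b)
    (h : 2 < (closerSet G b a).ncard) : (closerSet G a b).ncard = 2 := by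
  rcases hG.ncard_closerSet hab with ⟨h₁, -⟩ | ⟨-, h₁⟩ <;> omega

variable [Fintype V]

lemma exists_isSmallEnd (hconn : G.Connected) (hG : G.IsThreeGNDB 2) (hab : G.Adj a b)
    (h₂ : (closerSet G a b).ncard = 2) : ∃ c, G.IsSmallEnd a b c := by
  have hmem : ∀ x, x ∈ closerSet G a b ↔ G.dist x b = G.dist x a + 1 := fun x => by
    have := hG.dist_eq_add_one_or hconn hab x
    simp only [closerSet, Set.mem_ofPred_eq]
    omega
  obtain ⟨c, hca, hW⟩ : ∃ c, c ≠ a ∧ closerSet G a b = {a, c} := by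
    have ha : a ∈ closerSet G a b := by
      show G.dist a a < G.dist a b
      simp [dist_eq_one_iff_adj.mpr hab]
    obtain ⟨p, q, hpq, hs⟩ := Set.ncard_eq_two.mp h₂
    rw [hs] at ha
    rcases ha with rfl | rfl
    exacts [⟨q, hpq.symm, hs⟩, ⟨p, hpq, hs.trans (Set.pair_comm _ _)⟩]
  have hcW : c ∈ closerSet G a b := by simp [hW]
  have hc : G.dist c b = G.dist c a + 1 := (hmem c).1 hcW
  have hac : G.Adj a c := by
    obtain ⟨w, hcw, hw⟩ := hconn.exists_adj_mem_closerSet hcW hca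
    rw [hW] at hw
    rcases hw with rfl | rfl
    exacts [hcw.symm, absurd rfl hcw.ne]
  have hca1 : G.dist c a = 1 := by simpa [dist_comm] using hac
  refine ⟨c, hab, hac, by omega, fun y hy => ?_, fun x hxa hxc => ?_⟩
  · by_contra! hyne
    have hya : G.dist y a = 1 := by simpa [dist_comm] using hy
    have hyb : G.dist y b ≠ 0 := fun h => hyne.1 (hconn.dist_eq_zero_iff.mp h)
    have hyW : y ∈ closerSet G a b := by
      have := hG.dist_eq_add_one_or hconn hab y
      exact (hmem y).2 (by omega)
    rw [hW] at hyW
    rcases hyW with rfl | rfl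
    exacts [hy.ne rfl, hyne.2 rfl]
  · have hxW : x ∉ closerSet G a b := by simp [hW, hxa, hxc]
    rw [hmem] at hxW
    have := hG.dist_eq_add_one_or hconn hab x
    omega

lemma exists_isSmallEnd_of_two_lt_ncard_neighborSet (hconn : G.Connected)
    (hG : G.IsThreeGNDB 2) (hwh : G.Adj w v) (hv : 2 < (G.neighborSet v).ncard) :
    ∃ c, G.IsSmallEnd w v c := by
  refine hG.exists_isSmallEnd hconn hwh ?_
  rcases hG.ncard_closerSet hwh with ⟨h₂, -⟩ | ⟨-, h₂⟩
  · exact h₂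
  · obtain ⟨c, hc⟩ := hG.exists_isSmallEnd hconn hwh.symm h₂
    have := Set.ncard_le_ncard
      (show G.neighborSet v ⊆ {w, c} from fun y hy => hc.eq_or_eq_of_adj hy)
    have := Set.ncard_insert_le w {c}
    simp only [Set.ncard_singleton] at this
    omega

lemma exists_adj_ne (hconn : G.Connected) (hG : G.IsThreeGNDB 2)
    (hv : 2 < (G.neighborSet v).ncard) (u : V) : ∃ w, G.Adj u w ∧ w ≠ v := by
  by_cases huv : u = v
  · obtain ⟨w, hw, -⟩ := (Set.two_lt_ncard).1 hv
    exact ⟨w, huv ▸ hw, hw.ne.symm⟩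
  obtain ⟨n, hn⟩ : ∃ n, G.dist u v = n + 1 :=
    Nat.exists_eq_add_one.mpr (hconn.pos_dist_of_ne huv)
  obtain ⟨w, huw, -⟩ := hconn.exists_adj_dist_eq hn
  by_cases hwv : w = v
  · obtain ⟨c, hc⟩ := hG.exists_isSmallEnd_of_two_lt_ncard_neighborSet hconn (hwv ▸ huw) hv
    exact ⟨c, hc.adj_partner, hc.ne⟩
  · exact ⟨w, huw, hwv⟩

/-- `w, v, w'` lie in `W_{wp}`, so `p` is the small end of `wp`, and its partner `q` closes the
4-cycle `v w p q`. -/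
lemma exists_isSmallEnd_square (hconn : G.Connected) (hG : G.IsThreeGNDB 2)
    (hv : 2 < (G.neighborSet v).ncard) {w w' p p' : V} (hw : G.IsSmallEnd w v p)
    (hw' : G.IsSmallEnd w' v p') (hpp' : p ≠ p') :
    ∃ q, q ≠ w ∧ G.IsSmallEnd p w q ∧ G.IsSmallEnd q v p := by
  have hpv := hw.dist_partner
  have hw'v : G.dist w' v = 1 := dist_eq_one_iff_adj.mpr hw'.adj
  have hw'p : w' ≠ p := by
    rintro rfl
    omega
  have hww' : w ≠ w' := by
    rintro rfl
    exact hpp' (hw'.unique hw)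
  have hw'w : G.dist w' w = 2 := by
    have := hw.dist_eq hww'.symm hw'p
    omega
  have hw'p3 : G.dist w' p = 3 := by
    rcases hG.dist_eq_add_one_or hconn hw.adj_partner w' with h | h
    · omega
    · exact absurd (hw'.eq_of_adj (dist_eq_one_iff_adj.mp (by omega)) hw.ne) hpp'
  have hpw : (closerSet G p w).ncard = 2 := by
    refine hG.ncard_closerSet_eq_two hw.adj_partner.symm
      ((Set.two_lt_ncard_iff).2 ⟨w, v, w', ?_, ?_, ?_, hw.adj.ne, hww', hw'.adj.ne.symm⟩)
    · show G.dist w w < G.dist w p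
      simp [dist_eq_one_iff_adj.mpr hw.adj_partner]
    · show G.dist v w < G.dist v p
      rw [dist_comm, dist_eq_one_iff_adj.mpr hw.adj, dist_comm, hpv]
      omega
    · show G.dist w' w < G.dist w' p
      omega
  obtain ⟨q, hq⟩ := hG.exists_isSmallEnd hconn hw.adj_partner.symm hpw
  have hqv : G.Adj q v := by
    have := hw.dist_eq hq.ne hq.adj_partner.ne.symm
    have := hq.dist_partner
    exact dist_eq_one_iff_adj.mp (by omega)
  obtain ⟨r, hr⟩ := hG.exists_isSmallEnd_of_two_lt_ncard_neighborSet hconn hqv hv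
  obtain rfl := hr.eq_of_adj hq.adj_partner.symm hw.ne
  exact ⟨q, hq.ne, hq, hr⟩

/-- Otherwise the two 4-cycles through `v` give seven vertices whose neighbours, apart from
those of `v`, lie among them; an eighth vertex would then have no neighbour besides `v`. -/
lemma partner_eq (hconn : G.Connected) (hG : G.IsThreeGNDB 2)
    (hv : 2 < (G.neighborSet v).ncard) {w w' p p' : V} (hw : G.IsSmallEnd w v p)
    (hw' : G.IsSmallEnd w' v p') : p = p' := by
  classical
  by_contra hpp'
  obtain ⟨q, hqw, hpwq, hqvp⟩ := exists_isSmallEnd_square hconn hG hv hw hw' hpp'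
  obtain ⟨q', hq'w', hp'w'q', hq'vp'⟩ :=
    exists_isSmallEnd_square hconn hG hv hw' hw (Ne.symm hpp')
  let T : Finset V := {v, w, q, p, w', q', p'}
  have hT : T.card = 7 := by
    have := dist_eq_one_iff_adj.mpr hw.adj
    have := dist_eq_one_iff_adj.mpr hqvp.adj
    have := dist_eq_one_iff_adj.mpr hw'.adj
    have := dist_eq_one_iff_adj.mpr hq'vp'.adj
    have := hw.dist_partner
    have := hw'.dist_partner
    have : G.dist v v = 0 := dist_self
    -- The distance to `v` separates `v`, its neighbours and `p, p'`; partners separate the rest.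
    simp only [T]
    repeat rw [Finset.card_insert_of_notMem]
    all_goals simp only [Finset.mem_insert, Finset.mem_singleton, Finset.card_singleton, not_or]
    repeat' constructor
    all_goals intro e; subst e
    all_goals first
      | omega | contradiction | exact hpp' (hw'.unique hw) | exact hpp' (hq'vp'.unique hw)
      | exact hpp' (hw'.unique hqvp) | exact hpp' (hq'vp'.unique hqvp)
  have hcard : Fintype.card V = 8 := by
    rw [← Nat.card_eq_fintype_card, hG.card_eq hconn hw.adj]
  obtain ⟨z, -, hz⟩ := Finset.exists_mem_notMem_of_card_lt_card (s := T) (t := Finset.univ)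
    (by simp [hT, hcard])
  have huniv : insert z T = Finset.univ :=
    Finset.eq_univ_of_card _ (by rw [Finset.card_insert_of_notMem hz, hT, hcard])
  have hclosed : ∀ t ∈ T, t ≠ v → ∀ y, G.Adj t y → y ∈ T := by
    intro t ht htv y hty
    simp only [T, Finset.mem_insert, Finset.mem_singleton] at ht
    rcases ht with rfl | rfl | rfl | rfl | rfl | rfl | rfl
    · exact absurd rfl htv
    · rcases hw.eq_or_eq_of_adj hty with rfl | rfl <;> simp [T]
    · rcases hqvp.eq_or_eq_of_adj hty with rfl | rfl <;> simp [T]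
    · rcases hpwq.eq_or_eq_of_adj hty with rfl | rfl <;> simp [T]
    · rcases hw'.eq_or_eq_of_adj hty with rfl | rfl <;> simp [T]
    · rcases hq'vp'.eq_or_eq_of_adj hty with rfl | rfl <;> simp [T]
    · rcases hp'w'q'.eq_or_eq_of_adj hty with rfl | rfl <;> simp [T]
  obtain ⟨y, hzy, hyv⟩ := hG.exists_adj_ne hconn hv z
  have hy : y ∈ T := (Finset.mem_insert.mp (huniv ▸ Finset.mem_univ y)).resolve_left hzy.ne.symm
  exact hz (hclosed y hy hyv z hzy.symm)

lemma exists_isSmallEnd_of_dist_eq_three (hconn : G.Connected) (hG : G.IsThreeGNDB 2)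
    {x₀ x₁ x₂ x₃ : V} (h₀₁ : G.Adj x₀ x₁) (h₁₂ : G.Adj x₁ x₂) (h₂₃ : G.Adj x₂ x₃)
    (h₀₃ : G.dist x₀ x₃ = 3) : ∃ c, G.IsSmallEnd x₀ x₁ c := by
  have d₀₂ := hconn.dist_eq_two_of_dist_eq_three h₀₁ h₁₂ h₂₃ h₀₃
  have d₃₁ := hconn.dist_eq_two_of_dist_eq_three h₂₃.symm h₁₂.symm h₀₁.symm
    (by rwa [dist_comm])
  have hx₁₃ : x₁ ≠ x₃ := by
    rintro rfl
    simp at d₃₁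
  refine hG.exists_isSmallEnd hconn h₀₁ (hG.ncard_closerSet_eq_two h₀₁
    ((Set.two_lt_ncard_iff).2 ⟨x₁, x₂, x₃, ?_, ?_, ?_, h₁₂.ne, hx₁₃, h₂₃.ne⟩))
  · show G.dist x₁ x₁ < G.dist x₁ x₀
    simp [dist_comm, dist_eq_one_iff_adj.mpr h₀₁]
  · show G.dist x₂ x₁ < G.dist x₂ x₀
    rw [dist_comm, dist_eq_one_iff_adj.mpr h₁₂, dist_comm, d₀₂]
    omega
  · show G.dist x₃ x₁ < G.dist x₃ x₀
    rw [d₃₁, dist_comm, h₀₃]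
    omega

lemma ncard_closerSet_ne_two (hconn : G.Connected) (hG : G.IsThreeGNDB 2) {x₀ x₁ x₂ x₃ : V}
    (h₀₁ : G.Adj x₀ x₁) (h₁₂ : G.Adj x₁ x₂) (h₂₃ : G.Adj x₂ x₃) (h₀₃ : G.dist x₀ x₃ = 3) :
    (closerSet G x₁ x₂).ncard ≠ 2 := by
  intro hmid
  have hx₀₃ : ¬ G.Adj x₀ x₃ := fun h => by
    rw [dist_eq_one_iff_adj.mpr h] at h₀₃
    omega
  obtain ⟨c₀, h₀⟩ := hG.exists_isSmallEnd_of_dist_eq_three hconn h₀₁ h₁₂ h₂₃ h₀₃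
  obtain ⟨c₃, h₃⟩ := hG.exists_isSmallEnd_of_dist_eq_three hconn h₂₃.symm h₁₂.symm h₀₁.symm
    (by rwa [dist_comm])
  obtain ⟨r, h₁⟩ := hG.exists_isSmallEnd hconn h₁₂ hmid
  have d₀₂ := hconn.dist_eq_two_of_dist_eq_three h₀₁ h₁₂ h₂₃ h₀₃
  obtain rfl : x₀ = r := h₁.eq_of_adj h₀₁.symm fun h => by simp [h] at d₀₂
  have hc₀x₂ : G.Adj x₂ c₀ := by
    have := h₁.dist_eq h₀.ne h₀.adj_partner.ne.symm
    have := h₀.dist_partner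
    exact dist_eq_one_iff_adj.mp (by rw [dist_comm]; omega)
  have hx₂ : 2 < (G.neighborSet x₂).ncard := by
    refine (Set.two_lt_ncard_iff).2 ⟨x₁, x₃, c₀, h₁₂.symm, h₂₃, hc₀x₂, ?_, h₀.ne.symm, ?_⟩
    · rintro rfl
      exact hx₀₃ h₀₁
    · rintro rfl
      exact hx₀₃ h₀.adj_partner
  obtain rfl := hG.partner_eq hconn hx₂ h₁ h₃
  exact hx₀₃ h₃.adj_partner.symm

end IsThreeGNDB

end SimpleGraph

/-- There is no finite connected 3-GNDB graph with parameter `γ = 2` whose diameter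
is at least 3. -/
theorem stmt_12 {V : Type*} [Fintype V] (G : SimpleGraph V) (hconn : G.Connected)
    (hGNDB : ∀ a b : V, G.Adj a b →
      ({(closerSet G a b).ncard, (closerSet G b a).ncard} : Set ℕ) = {2, 6}) :
    ¬ 3 ≤ G.diam := by
  intro hdiam
  have hG : G.IsThreeGNDB 2 := ⟨two_pos, hGNDB⟩
  have := hconn.nonempty
  obtain ⟨u, v, huv⟩ := G.exists_dist_eq_diam
  obtain ⟨x₁, x₂, x₃, h₁, h₂, h₃, hd⟩ := hconn.exists_adj_adj_adj_dist_eq_three (huv ▸ hdiam)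
  rcases hG.ncard_closerSet h₂ with ⟨hmid, -⟩ | ⟨-, hmid⟩
  · exact hG.ncard_closerSet_ne_two hconn h₁ h₂ h₃ hd hmid
  · exact hG.ncard_closerSet_ne_two hconn h₃.symm h₂.symm h₁.symm
      (by rwa [SimpleGraph.dist_comm]) hmid
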